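/- (Main theorem) Let m ≥ 2, n ≥ 3, and let k be a unit modulo n of multiplicative order α with k^m ≡ 1 (mod n). Assume α is even and k^{α/2} ≡ −1 (mod n). Then diam(G_{m,n,k}) ≤ ⌊m/2⌋ + wt(n, k; α) if α ≠ m, and diam(G_{m,n,k}) ≤ ⌊m/2⌋ + wt(n, k; α) + deg(n,k;α) if α = m. -/

import Mathlib

/-!
Every element of `G_{m,n,k}` is `y^c x^a`. Writing `c = Σ b_j k^{i_j}` with `Σ |b_j| ≤ wt` and
collecting equal exponents gives `c = Σ_{p ≤ d} c_p k^p`, and the word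
`y^{c_0} x⁻¹ y^{c_1} x⁻¹ ⋯ x⁻¹ y^{c_d}` equals `y^c x^{-d}`; so `y^c x^a` has length at most
`wt + d + |a + d|`, where `a` may be moved mod `m` to make `|a + d| ≤ m/2`. When `k^{α/2} = -1`,
every `k^i` is `±k^p` and also `±k^{-p}` for some `p < α/2`, so one can take `d = α/2 - 1` and walk
in the direction of `x^a`; as `α` is a proper divisor of `m`, the detour fits into `m/2`.
-/

/-- The set `Ω(i, λ) = { b₁k^{i₁} + ⋯ + b_r k^{i_r} mod n : |b_j| ≤ λ_j }` in `ℤ/nℤ`. -/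
def OmegaSet (n : ℕ) (k : (ZMod n)ˣ) {r : ℕ} (i : Fin r → ℕ) (lam : Fin r → ℕ) :
    Set (ZMod n) :=
  { x | ∃ b : Fin r → ℤ, (∀ j, |b j| ≤ (lam j : ℤ)) ∧
      x = ∑ j, (b j : ZMod n) * ((k ^ i j : (ZMod n)ˣ) : ZMod n) }

/-- A `sequence`: a strictly decreasing tuple `α−1 ≥ i₁ > i₂ > ⋯ > i_r ≥ 0`. -/
def IsSeq (α : ℕ) {r : ℕ} (i : Fin r → ℕ) : Prop :=
  (∀ j, i j ≤ α - 1) ∧ StrictAnti i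

/-- `wt(n, k; i)`: the minimal total weight `λ₁ + ⋯ + λ_r` over tuples `λ`
with `Ω(i,λ) = ℤ/nℤ`. -/
noncomputable def wtSeq (n : ℕ) (k : (ZMod n)ˣ) {r : ℕ} (i : Fin r → ℕ) : ℕ :=
  sInf { s | ∃ lam : Fin r → ℕ, OmegaSet n k i lam = Set.univ ∧ ∑ j, lam j = s }

/-- The maximal sequence `Δ : α−1 > α−2 > ⋯ > 1 > 0`. -/
def DeltaSeq (α : ℕ) : Fin α → ℕ := fun j => α - 1 - (j : ℕ)

/-- `wt(n, k; α) := wt(n, k; Δ)`. -/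
noncomputable def wtAlpha (n : ℕ) (k : (ZMod n)ˣ) (α : ℕ) : ℕ :=
  wtSeq n k (DeltaSeq α)

/-- The degree of a sequence: its largest entry. -/
noncomputable def degSeq {r : ℕ} (i : Fin r → ℕ) : ℕ := sSup (Set.range i)

/-- The codegree of a sequence: its smallest nonzero entry. -/
noncomputable def codegSeq {r : ℕ} (i : Fin r → ℕ) : ℕ :=
  sInf { v | v ∈ Set.range i ∧ v ≠ 0 }

/-- A minimal prime sequence realizing `wt(n,k;α)`: a reduced sequence (i.e. one
containing `0`) of weight `wt(n,k;α)` such that no proper reduced subsequence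
has weight `wt(n,k;α)`. -/
def IsMinimalPrimeSeq (n : ℕ) (k : (ZMod n)ˣ) (α : ℕ) {r : ℕ} (i : Fin r → ℕ) : Prop :=
  IsSeq α i ∧ 0 ∈ Set.range i ∧ wtSeq n k i = wtAlpha n k α ∧
    ∀ (q : ℕ) (i₀ : Fin q → ℕ), IsSeq α i₀ → 0 ∈ Set.range i₀ →
      Set.range i₀ ⊆ Set.range i → Set.range i₀ ≠ Set.range i →
      wtSeq n k i₀ ≠ wtAlpha n k α

/-- `deg(n,k;α)`: the smallest degree of a minimal prime sequence realizing `wt(n,k;α)`. -/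
noncomputable def degNK (n : ℕ) (k : (ZMod n)ˣ) (α : ℕ) : ℕ :=
  sInf { d | ∃ (r : ℕ) (i : Fin r → ℕ), IsMinimalPrimeSeq n k α i ∧ degSeq i = d }
/-- Relators of the split metacyclic group `⟨x, y | x^m = y^n = 1, x⁻¹yx = y^k⟩`,
with generator `0` playing the role of `x` and `1` that of `y`. -/
def metacyclicRels (m n k : ℕ) : Set (FreeGroup (Fin 2)) :=
  { FreeGroup.of 0 ^ m, FreeGroup.of 1 ^ n,
    (FreeGroup.of 0)⁻¹ * FreeGroup.of 1 * FreeGroup.of 0 * (FreeGroup.of 1 ^ k)⁻¹ }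

/-- The split metacyclic group `G_{m,n,k} = ℤ_m ⋉_k ℤ_n
  = ⟨x, y | x^m = y^n = 1, x⁻¹yx = y^k⟩`. -/
abbrev SplitMetacyclic (m n k : ℕ) : Type := PresentedGroup (metacyclicRels m n k)

/-- The generator `x` of `G_{m,n,k}`. -/
def xgen (m n k : ℕ) : SplitMetacyclic m n k := PresentedGroup.of 0

/-- The generator `y` of `G_{m,n,k}`. -/
def ygen (m n k : ℕ) : SplitMetacyclic m n k := PresentedGroup.of 1

/-- The word norm of `g` with respect to a set `S` of generators:
the least `t` such that `g` is a product of `t` elements of `S`. -/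
noncomputable def wordNorm {G : Type*} [Group G] (S : Set G) (g : G) : ℕ :=
  sInf { t | ∃ w : List G, (∀ u ∈ w, u ∈ S) ∧ w.length = t ∧ w.prod = g }

/-- The diameter of a group with respect to a set `S` of generators. -/
noncomputable def diam {G : Type*} [Group G] (S : Set G) : ℕ :=
  ⨆ g : G, wordNorm S g

/-- The generating set `{x, x⁻¹, y, y⁻¹}` of `G_{m,n,k}`. -/
def genSet (m n k : ℕ) : Set (SplitMetacyclic m n k) :=
  {xgen m n k, (xgen m n k)⁻¹, ygen m n k, (ygen m n k)⁻¹}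

open Finset

section Expansion

variable {R : Type*} [CommRing R]

def HasExpansion (v : R) (d w : ℕ) (z : R) : Prop :=
  ∃ c : ℕ → ℤ, ∑ p ∈ range (d + 1), (c p).natAbs ≤ w ∧
    z = ∑ p ∈ range (d + 1), (c p : R) * v ^ p

theorem hasExpansion_sum {ι : Type*} [Fintype ι] (v : R) {d w : ℕ} (b : ι → ℤ) (f : ι → ℕ)
    (hf : ∀ j, f j ≤ d) (hw : ∑ j, (b j).natAbs ≤ w) :
    HasExpansion v d w (∑ j, (b j : R) * v ^ f j) := by
  classical
  have hmaps : ∀ j ∈ (univ : Finset ι), f j ∈ range (d + 1) :=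
    fun j _ => mem_range.2 (Nat.lt_succ_of_le (hf j))
  refine ⟨fun p => ∑ j with f j = p, b j, ?_, ?_⟩
  · calc ∑ p ∈ range (d + 1), (∑ j with f j = p, b j).natAbs
        ≤ ∑ p ∈ range (d + 1), ∑ j with f j = p, (b j).natAbs :=
          sum_le_sum fun p _ => Int.natAbs_sum_le _ _
      _ = ∑ j, (b j).natAbs := sum_fiberwise_of_maps_to hmaps _
      _ ≤ w := hw
  · rw [← sum_fiberwise_of_maps_to hmaps]
    refine sum_congr rfl fun p _ => ?_
    rw [Int.cast_sum, sum_mul]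
    exact sum_congr rfl fun j hj => by rw [(mem_filter.1 hj).2]

theorem Units.exists_zpow_eq_sign_mul_pow {w : Rˣ} {h : ℕ} (hh : 0 < h) (hw : w ^ h = -1)
    (e : ℤ) : ∃ s : ℤ, s.natAbs = 1 ∧ ∃ p < h, ((w ^ e : Rˣ) : R) = s * (w : R) ^ p := by
  have hp : ((e % h).toNat : ℤ) = e % h := Int.toNat_of_nonneg (Int.emod_nonneg _ (by omega))
  have hq : w ^ e = (-1) ^ (e / h) * w ^ (e % h).toNat := by
    rw [← zpow_natCast w, hp, ← hw, ← zpow_natCast, ← zpow_mul, ← zpow_add, Int.mul_ediv_add_emod]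
  have hlt : (e % h).toNat < h := by
    have := Int.emod_lt_of_pos e (Int.natCast_pos.2 hh)
    omega
  rcases Int.even_or_odd (e / h) with he | ho
  · exact ⟨1, rfl, _, hlt, by simp [hq, he.neg_one_zpow]⟩
  · exact ⟨-1, rfl, _, hlt, by simp [hq, ho.neg_one_zpow]⟩

end Expansion

section OmegaSet

variable {n : ℕ} {u : (ZMod n)ˣ} {r : ℕ} {i : Fin r → ℕ}

theorem exists_omegaSet_eq_univ_sum_eq_wtSeq [NeZero n] (h0 : 0 ∈ Set.range i) :
    ∃ lam : Fin r → ℕ, OmegaSet n u i lam = Set.univ ∧ ∑ j, lam j = wtSeq n u i := by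
  obtain ⟨j₀, hj₀⟩ := h0
  refine Nat.sInf_mem (s := {s | ∃ lam : Fin r → ℕ, OmegaSet n u i lam = Set.univ ∧ ∑ j, lam j = s})
    ⟨_, fun _ => n, ?_, rfl⟩
  refine Set.eq_univ_of_forall fun z => ⟨Pi.single j₀ (z.val : ℤ), fun j => ?_, ?_⟩
  · rcases eq_or_ne j j₀ with rfl | hj
    · rw [Pi.single_eq_same, Nat.abs_cast]
      exact_mod_cast (ZMod.val_lt z).le
    · simp [hj]
  · simp [Pi.single_apply, hj₀]

theorem hasExpansion_of_mem_omegaSet {lam : Fin r → ℕ} {z : ZMod n} (v : ZMod n) {d : ℕ}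
    (hz : z ∈ OmegaSet n u i lam)
    (hs : ∀ j, ∃ s : ℤ, s.natAbs = 1 ∧ ∃ p ≤ d, ((u ^ i j : (ZMod n)ˣ) : ZMod n) = s * v ^ p) :
    HasExpansion v d (∑ j, lam j) z := by
  choose s hs p hpd hp using hs
  obtain ⟨b, hb, rfl⟩ := hz
  have hsum : ∑ j, (b j : ZMod n) * ((u ^ i j : (ZMod n)ˣ) : ZMod n)
      = ∑ j, ((b j * s j : ℤ) : ZMod n) * v ^ p j := by
    simp only [hp, Int.cast_mul, mul_assoc]
  rw [hsum]
  refine hasExpansion_sum v _ p hpd (sum_le_sum fun j _ => ?_)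
  rw [Int.natAbs_mul, hs j, mul_one]
  have := hb j
  rw [Int.abs_eq_natAbs] at this
  exact_mod_cast this

theorem hasExpansion_of_mem_omegaSet_of_le {lam : Fin r → ℕ} {z : ZMod n} {d : ℕ}
    (hz : z ∈ OmegaSet n u i lam) (hi : ∀ j, i j ≤ d) :
    HasExpansion (u : ZMod n) d (∑ j, lam j) z :=
  hasExpansion_of_mem_omegaSet _ hz fun j => ⟨1, rfl, i j, hi j, by simp⟩

-- Since `v ^ h = -1`, every power of `v` is `± v ^ p` with `p < h`.
theorem hasExpansion_of_mem_omegaSet_of_pow_eq_neg_one {lam : Fin r → ℕ} {z : ZMod n}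
    (hz : z ∈ OmegaSet n u i lam) {v : (ZMod n)ˣ} {h : ℕ} (hh : 0 < h) (hv : v ^ h = -1)
    {e : ℤ} (huv : u = v ^ e) : HasExpansion (v : ZMod n) (h - 1) (∑ j, lam j) z := by
  refine hasExpansion_of_mem_omegaSet _ hz fun j => ?_
  obtain ⟨s, hs, p, hp, hsp⟩ := Units.exists_zpow_eq_sign_mul_pow hh hv (e * i j)
  exact ⟨s, hs, p, by omega, by rw [huv, ← zpow_natCast, ← zpow_mul, hsp]⟩

end OmegaSet

section MinimalPrimeSeq

variable {n : ℕ} (u : (ZMod n)ˣ) {α : ℕ}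

theorem isSeq_deltaSeq (α : ℕ) : IsSeq α (DeltaSeq α) :=
  ⟨fun j => by unfold DeltaSeq; omega, fun j j' (hjj' : (j : ℕ) < j') => by
    unfold DeltaSeq; omega⟩

theorem zero_mem_range_deltaSeq (hα : 0 < α) : 0 ∈ Set.range (DeltaSeq α) :=
  ⟨⟨α - 1, by omega⟩, by simp [DeltaSeq]⟩

theorem le_degSeq {r : ℕ} (i : Fin r → ℕ) (j : Fin r) : i j ≤ degSeq i :=
  le_csSup (Set.finite_range i).bddAbove (Set.mem_range_self j)

-- A reduced sequence of weight `wt(n,k;α)` with fewest entries is a minimal prime sequence.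
theorem exists_isMinimalPrimeSeq (hα : 0 < α) :
    ∃ (r : ℕ) (i : Fin r → ℕ), IsMinimalPrimeSeq n u α i := by
  set T : Set ℕ :=
    {r | ∃ i : Fin r → ℕ, IsSeq α i ∧ 0 ∈ Set.range i ∧ wtSeq n u i = wtAlpha n u α}
  obtain ⟨i, hseq, h0, hwt⟩ := Nat.sInf_mem (s := T)
    ⟨α, DeltaSeq α, isSeq_deltaSeq α, zero_mem_range_deltaSeq hα, rfl⟩
  refine ⟨sInf T, i, hseq, h0, hwt, fun q i₀ hseq₀ h0₀ hsub hne hwt₀ => ?_⟩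
  have hcard : q < sInf T := by
    have := Set.ncard_lt_ncard (hsub.ssubset_of_ne hne) (Set.finite_range i)
    rwa [Set.ncard_range_of_injective hseq.2.injective,
      Set.ncard_range_of_injective hseq₀.2.injective, Nat.card_fin, Nat.card_fin] at this
  exact hcard.not_ge (Nat.sInf_le ⟨i₀, hseq₀, h0₀, hwt₀⟩)

theorem exists_isMinimalPrimeSeq_degSeq_eq_degNK (hα : 0 < α) :
    ∃ (r : ℕ) (i : Fin r → ℕ), IsMinimalPrimeSeq n u α i ∧ degSeq i = degNK n u α := by
  obtain ⟨r, i, hi⟩ := exists_isMinimalPrimeSeq u hα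
  exact Nat.sInf_mem
    (s := {d | ∃ (r : ℕ) (i : Fin r → ℕ), IsMinimalPrimeSeq n u α i ∧ degSeq i = d})
    ⟨_, r, i, hi, rfl⟩

end MinimalPrimeSeq

section WordLength

variable {G : Type*} [Group G] (S : Set G)

def WordLenLE (g : G) (t : ℕ) : Prop :=
  ∃ w : List G, (∀ s ∈ w, s ∈ S) ∧ w.length ≤ t ∧ w.prod = g

variable {S}

theorem WordLenLE.wordNorm_le {g : G} {t : ℕ} (h : WordLenLE S g t) : wordNorm S g ≤ t := by
  obtain ⟨w, hS, hlen, rfl⟩ := h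
  exact (Nat.sInf_le ⟨w, hS, rfl, rfl⟩ : wordNorm S w.prod ≤ w.length).trans hlen

theorem WordLenLE.mono {g : G} {t t' : ℕ} (h : WordLenLE S g t) (ht : t ≤ t') :
    WordLenLE S g t' := by
  obtain ⟨w, hS, hlen, hw⟩ := h
  exact ⟨w, hS, hlen.trans ht, hw⟩

theorem WordLenLE.mul {g g' : G} {t t' : ℕ} (h : WordLenLE S g t) (h' : WordLenLE S g' t') :
    WordLenLE S (g * g') (t + t') := by
  obtain ⟨w, hS, hlen, rfl⟩ := h
  obtain ⟨w', hS', hlen', rfl⟩ := h'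
  refine ⟨w ++ w', fun s hs => ?_, by simpa using add_le_add hlen hlen', List.prod_append⟩
  exact (List.mem_append.1 hs).elim (hS s) (hS' s)

theorem wordLenLE_pow {s : G} (hs : s ∈ S) (p : ℕ) : WordLenLE S (s ^ p) p :=
  ⟨List.replicate p s, fun _ h => List.eq_of_mem_replicate h ▸ hs, by simp,
    List.prod_replicate p s⟩

theorem wordLenLE_zpow {s : G} (hs : s ∈ S) (hs' : s⁻¹ ∈ S) (e : ℤ) :
    WordLenLE S (s ^ e) e.natAbs := by
  obtain ⟨p, rfl | rfl⟩ := Int.eq_nat_or_neg e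
  · simpa using wordLenLE_pow hs p
  · simpa using wordLenLE_pow hs' p

theorem pow_mul_zpow_of_mul_eq {e y : G} {K : ℕ} (hK : e * y = y ^ K * e) (p : ℕ) (c : ℤ) :
    e ^ p * y ^ c = y ^ (c * K ^ p) * e ^ p := by
  have hsemi : SemiconjBy (e ^ p) y (y ^ K ^ p) := by
    induction p with
    | zero => simp [SemiconjBy]
    | succ p ih => simpa [pow_succ, pow_mul] using (ih.pow_right K).mul_left hK
  rw [(hsemi.zpow_right c).eq, ← zpow_natCast, ← zpow_mul, mul_comm, Nat.cast_pow]

theorem zpow_eq_zpow_of_pow_eq_one {y : G} {n : ℕ} (hy : y ^ n = 1) {c c' : ℤ}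
    (h : c ≡ c' [ZMOD n]) : y ^ c = y ^ c' :=
  zpow_eq_zpow_iff_modEq.2 (h.of_dvd (Int.natCast_dvd_natCast.2 (orderOf_dvd_of_pow_eq_one hy)))

variable {e y : G} {K : ℕ}

-- The word `y^{c₀} e y^{c₁} e ⋯ e y^{c_d}`, with each `e` pushed to the right.
theorem wordLenLE_zpow_sum_mul_pow (he : e ∈ S) (hy : y ∈ S) (hy' : y⁻¹ ∈ S)
    (hK : e * y = y ^ K * e) (c : ℕ → ℤ) (d : ℕ) :
    WordLenLE S (y ^ (∑ p ∈ range (d + 1), c p * K ^ p) * e ^ d)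
      (∑ p ∈ range (d + 1), (c p).natAbs + d) := by
  induction d with
  | zero => simpa using wordLenLE_zpow hy hy' (c 0)
  | succ d ih =>
    have hstep : y ^ (∑ p ∈ range (d + 2), c p * K ^ p) * e ^ (d + 1)
        = y ^ (∑ p ∈ range (d + 1), c p * K ^ p) * e ^ d * e ^ 1 * y ^ c (d + 1) := by
      rw [mul_assoc _ (e ^ d), ← pow_add, mul_assoc, pow_mul_zpow_of_mul_eq hK, sum_range_succ,
        zpow_add, mul_assoc]
    rw [hstep, sum_range_succ (fun p => (c p).natAbs)]
    refine ((ih.mul (wordLenLE_pow he 1)).mul (wordLenLE_zpow hy hy' _)).mono ?_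
    omega

theorem wordNorm_le_of_hasExpansion (he : e ∈ S) (he' : e⁻¹ ∈ S) (hy : y ∈ S) (hy' : y⁻¹ ∈ S)
    (hK : e * y = y ^ K * e) {n : ℕ} (hyn : y ^ n = 1) {c : ℤ} {d w : ℕ}
    (hc : HasExpansion (K : ZMod n) d w c) (j : ℤ) :
    wordNorm S (y ^ c * e ^ d * e ^ j) ≤ w + d + j.natAbs := by
  obtain ⟨c', hw, hc'⟩ := hc
  have hyc : y ^ c = y ^ (∑ p ∈ range (d + 1), c' p * K ^ p) :=
    zpow_eq_zpow_of_pow_eq_one hyn ((ZMod.intCast_eq_intCast_iff _ _ _).1 (by push_cast; exact hc'))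
  rw [hyc]
  exact (((wordLenLE_zpow_sum_mul_pow he hy hy' hK c' d).mono (by omega)).mul
    (wordLenLE_zpow he he' j)).wordNorm_le

end WordLength

namespace SplitMetacyclic

variable {m n k : ℕ}

theorem xgen_pow_eq_one : xgen m n k ^ m = 1 := by
  simpa [xgen, PresentedGroup.of] using
    PresentedGroup.one_of_mem (rels := metacyclicRels m n k) (x := FreeGroup.of 0 ^ m)
      (by simp [metacyclicRels])

theorem ygen_pow_eq_one : ygen m n k ^ n = 1 := by
  simpa [ygen, PresentedGroup.of] using
    PresentedGroup.one_of_mem (rels := metacyclicRels m n k) (x := FreeGroup.of 1 ^ n)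
      (by simp [metacyclicRels])

theorem xgen_inv_mul_ygen :
    (xgen m n k)⁻¹ * ygen m n k = ygen m n k ^ k * (xgen m n k)⁻¹ := by
  have := PresentedGroup.mk_eq_mk_of_mul_inv_mem (rels := metacyclicRels m n k)
    (x := (FreeGroup.of 0)⁻¹ * FreeGroup.of 1 * FreeGroup.of 0) (y := FreeGroup.of 1 ^ k)
    (by simp [metacyclicRels])
  simp only [map_mul, map_inv, map_pow] at this
  exact eq_mul_inv_of_mul_eq this

-- `x = (x⁻¹) ^ (m - 1)`, so `x` conjugates `y` to the power `k ^ (m - 1)`.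
theorem xgen_mul_ygen (hm : 0 < m) :
    xgen m n k * ygen m n k = ygen m n k ^ (k ^ (m - 1)) * xgen m n k := by
  have hx : (xgen m n k)⁻¹ ^ (m - 1) = xgen m n k := by
    rw [inv_pow, inv_eq_iff_mul_eq_one, ← pow_succ, Nat.sub_add_cancel hm, xgen_pow_eq_one]
  have := pow_mul_zpow_of_mul_eq (xgen_inv_mul_ygen (m := m) (n := n) (k := k)) (m - 1) 1
  rwa [hx, one_mul, zpow_one, ← Nat.cast_pow, zpow_natCast] at this

theorem xgen_mem_genSet : xgen m n k ∈ genSet m n k := by simp [genSet]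
theorem xgen_inv_mem_genSet : (xgen m n k)⁻¹ ∈ genSet m n k := by simp [genSet]
theorem ygen_mem_genSet : ygen m n k ∈ genSet m n k := by simp [genSet]
theorem ygen_inv_mem_genSet : (ygen m n k)⁻¹ ∈ genSet m n k := by simp [genSet]

theorem exists_eq_ygen_zpow_mul_xgen_zpow (hm : 0 < m) (g : SplitMetacyclic m n k) :
    ∃ c a : ℤ, g = ygen m n k ^ c * xgen m n k ^ a := by
  have hgen : ∀ s ∈ Set.range PresentedGroup.of, s = xgen m n k ∨ s = ygen m n k := by
    rintro _ ⟨j, rfl⟩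
    fin_cases j
    exacts [.inl rfl, .inr rfl]
  have hg : g ∈ Subgroup.closure (Set.range PresentedGroup.of) := by simp
  induction hg using Subgroup.closure_induction_left with
  | one => exact ⟨0, 0, by simp⟩
  | mul_left s hs g _ ih =>
    obtain ⟨c, a, rfl⟩ := ih
    rcases hgen s hs with rfl | rfl
    · have hc := pow_mul_zpow_of_mul_eq (xgen_mul_ygen (n := n) (k := k) hm) 1 c
      rw [pow_one, pow_one] at hc
      exact ⟨c * (k ^ (m - 1) : ℕ), 1 + a, by rw [← mul_assoc, hc, zpow_add, zpow_one, mul_assoc]⟩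
    · exact ⟨1 + c, a, by rw [zpow_add, zpow_one, mul_assoc]⟩
  | inv_mul_cancel s hs g _ ih =>
    obtain ⟨c, a, rfl⟩ := ih
    rcases hgen s hs with rfl | rfl
    · have hc := pow_mul_zpow_of_mul_eq (xgen_inv_mul_ygen (m := m) (n := n) (k := k)) 1 c
      rw [pow_one, pow_one] at hc
      exact ⟨c * k, -1 + a, by rw [← mul_assoc, hc, zpow_add, zpow_neg_one, mul_assoc]⟩
    · exact ⟨-1 + c, a, by rw [zpow_add, zpow_neg_one, mul_assoc]⟩

theorem diam_genSet_le (hm : 0 < m) {B : ℕ}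
    (hB : ∀ c a : ℤ, wordNorm (genSet m n k) (ygen m n k ^ c * xgen m n k ^ a) ≤ B) :
    diam (genSet m n k) ≤ B :=
  ciSup_le fun g => by
    obtain ⟨c, a, rfl⟩ := exists_eq_ygen_zpow_mul_xgen_zpow hm g
    exact hB c a

theorem xgen_zpow_eq_of_modEq {a a' : ℤ} (h : a ≡ a' [ZMOD m]) :
    xgen m n k ^ a = xgen m n k ^ a' :=
  zpow_eq_zpow_of_pow_eq_one xgen_pow_eq_one h

theorem wordNorm_le_of_omegaSet_eq_univ (hm : 0 < m) {u : (ZMod n)ˣ} (hu : (u : ZMod n) = k)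
    {r d : ℕ} {i lam : Fin r → ℕ} (hΩ : OmegaSet n u i lam = Set.univ) (hi : ∀ j, i j ≤ d)
    (c a : ℤ) :
    wordNorm (genSet m n k) (ygen m n k ^ c * xgen m n k ^ a) ≤ m / 2 + ∑ j, lam j + d := by
  have hc : HasExpansion (k : ZMod n) d (∑ j, lam j) c :=
    hu ▸ hasExpansion_of_mem_omegaSet_of_le (hΩ ▸ Set.mem_univ _) hi
  -- Walk `d` steps along `x⁻¹`, then back to `x ^ a` the short way round.
  set t := (a + d).bmod m
  have hx : xgen m n k ^ a = (xgen m n k)⁻¹ ^ d * (xgen m n k)⁻¹ ^ (-t) := by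
    rw [inv_pow, inv_zpow', neg_neg, ← zpow_natCast, ← zpow_neg, ← zpow_add]
    have ht : t ≡ a + d [ZMOD m] := Int.bmod_emod
    exact xgen_zpow_eq_of_modEq (by simpa using (ht.add_left (-d)).symm)
  rw [hx, ← mul_assoc]
  have := wordNorm_le_of_hasExpansion (S := genSet m n k) xgen_inv_mem_genSet
    (by rw [inv_inv]; exact xgen_mem_genSet) ygen_mem_genSet ygen_inv_mem_genSet xgen_inv_mul_ygen
    ygen_pow_eq_one hc (-t)
  have := Int.le_bmod (x := a + d) hm
  have := Int.bmod_le (x := a + d) hm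
  omega

theorem wordNorm_le_of_pow_eq_neg_one (hm : 0 < m) {u : (ZMod n)ˣ} (hu : (u : ZMod n) = k)
    (hum : u ^ m = 1) {h : ℕ} (hh : 0 < h) (hneg : u ^ h = -1) (hhm : 2 * (h - 1) ≤ m / 2)
    {r : ℕ} {i lam : Fin r → ℕ} (hΩ : OmegaSet n u i lam = Set.univ) (c a : ℤ) :
    wordNorm (genSet m n k) (ygen m n k ^ c * xgen m n k ^ a) ≤ m / 2 + ∑ j, lam j := by
  have hz : (c : ZMod n) ∈ OmegaSet n u i lam := hΩ ▸ Set.mem_univ _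
  set t := a.bmod m
  have ht₁ := Int.le_bmod (x := a) hm
  have ht₂ := Int.bmod_le (x := a) hm
  rw [xgen_zpow_eq_of_modEq (Int.bmod_emod.symm : a ≡ t [ZMOD m])]
  -- Walk `h - 1` steps in the direction of `x ^ t`, folding the powers of `u` accordingly.
  rcases le_or_gt 0 t with ht | ht
  · have hK : ((k ^ (m - 1) : ℕ) : ZMod n) = ((u⁻¹ : (ZMod n)ˣ) : ZMod n) := by
      rw [← eq_inv_of_mul_eq_one_left (a := u ^ (m - 1)) (by rw [← pow_succ,
        Nat.sub_add_cancel hm, hum]), Nat.cast_pow, Units.val_pow_eq_pow_val, hu]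
    have hc : HasExpansion ((k ^ (m - 1) : ℕ) : ZMod n) (h - 1) (∑ j, lam j) c :=
      hK ▸ hasExpansion_of_mem_omegaSet_of_pow_eq_neg_one hz hh
        (by rw [inv_pow, hneg, inv_neg_one]) (e := -1) (by simp)
    have hx : xgen m n k ^ t = xgen m n k ^ (h - 1) * xgen m n k ^ (t - (h - 1 : ℕ)) := by
      rw [← zpow_natCast, ← zpow_add, add_sub_cancel]
    rw [hx, ← mul_assoc]
    have := wordNorm_le_of_hasExpansion (S := genSet m n k) xgen_mem_genSet xgen_inv_mem_genSet
      ygen_mem_genSet ygen_inv_mem_genSet (xgen_mul_ygen hm) ygen_pow_eq_one hc (t - (h - 1 : ℕ))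
    omega
  · have hc : HasExpansion (k : ZMod n) (h - 1) (∑ j, lam j) c :=
      hu ▸ hasExpansion_of_mem_omegaSet_of_pow_eq_neg_one hz hh hneg (e := 1) (by simp)
    have hx : xgen m n k ^ t
        = (xgen m n k)⁻¹ ^ (h - 1) * (xgen m n k)⁻¹ ^ (-t - (h - 1 : ℕ)) := by
      rw [← zpow_natCast, ← zpow_add, add_sub_cancel, inv_zpow', neg_neg]
    rw [hx, ← mul_assoc]
    have := wordNorm_le_of_hasExpansion (S := genSet m n k) xgen_inv_mem_genSet
      (by rw [inv_inv]; exact xgen_mem_genSet) ygen_mem_genSet ygen_inv_mem_genSet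
      xgen_inv_mul_ygen ygen_pow_eq_one hc (-t - (h - 1 : ℕ))
    omega

end SplitMetacyclic

/-- Main theorem: if `α = ord(k)` is even and `k^{α/2} ≡ −1 (mod n)`, then
`diam(G_{m,n,k}) ≤ ⌊m/2⌋ + wt(n,k;α)` when `α ≠ m`, and
`diam(G_{m,n,k}) ≤ ⌊m/2⌋ + wt(n,k;α) + deg(n,k;α)` when `α = m`. -/
theorem diam_split_metacyclic_bound (m n k : ℕ) (hm : 2 ≤ m) (hn : 3 ≤ n)
    (hk : Nat.Coprime k n) (hkm : k ^ m ≡ 1 [MOD n]) (α : ℕ)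
    (hα : orderOf (ZMod.unitOfCoprime k hk) = α) (heven : Even α)
    (hneg : ZMod.unitOfCoprime k hk ^ (α / 2) = (-1 : (ZMod n)ˣ)) :
    (α ≠ m → diam (genSet m n k) ≤ m / 2 + wtAlpha n (ZMod.unitOfCoprime k hk) α) ∧
    (α = m → diam (genSet m n k) ≤ m / 2 + wtAlpha n (ZMod.unitOfCoprime k hk) α
      + degNK n (ZMod.unitOfCoprime k hk) α) := by
  have : NeZero n := ⟨by omega⟩
  set u := ZMod.unitOfCoprime k hk
  have hu : (u : ZMod n) = k := ZMod.coe_unitOfCoprime k hk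
  have hum : u ^ m = 1 := Units.ext <| by
    rw [Units.val_pow_eq_pow_val, hu, ← Nat.cast_pow, Units.val_one, ← Nat.cast_one,
      ZMod.natCast_eq_natCast_iff]
    exact hkm
  have hαm : α ∣ m := hα ▸ orderOf_dvd_of_pow_eq_one hum
  have hα0 : 0 < α := hα ▸ orderOf_pos u
  refine ⟨fun hne => ?_, fun _ => ?_⟩
  · have h2α : 2 * α ≤ m := by
      obtain ⟨q, rfl⟩ := hαm
      have hq : 2 ≤ q := by rcases q with _ | _ | q <;> simp_all
      nlinarith
    obtain ⟨lam, hΩ, hlam⟩ := exists_omegaSet_eq_univ_sum_eq_wtSeq (u := u)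
      (zero_mem_range_deltaSeq hα0)
    rw [wtAlpha, ← hlam]
    obtain ⟨h, rfl⟩ := heven
    exact SplitMetacyclic.diam_genSet_le (by omega)
      (SplitMetacyclic.wordNorm_le_of_pow_eq_neg_one (by omega) hu hum (by omega) hneg
        (by omega) hΩ)
  · obtain ⟨r, i, hi, hdeg⟩ := exists_isMinimalPrimeSeq_degSeq_eq_degNK u hα0
    obtain ⟨lam, hΩ, hlam⟩ := exists_omegaSet_eq_univ_sum_eq_wtSeq (u := u) hi.2.1
    rw [← hdeg, ← hi.2.2.1, ← hlam]
    exact SplitMetacyclic.diam_genSet_le (by omega)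
      (SplitMetacyclic.wordNorm_le_of_omegaSet_eq_univ (by omega) hu hΩ (le_degSeq i))
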